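/- arXiv:2212.09571 — 11 statements merged into one kernel-verified Lean document; each statement's English description precedes it below -/
import Mathlib

section
/- For any graphs G and H, the domination number of the Cartesian product satisfies γ(G □ H) ≥ (1/2)·γ(G)·γ(H). -/
open SimpleGraph

/-- `D` is a dominating set of `G`: every vertex is in `D` or adjacent to a vertex of `D`. -/
def IsDomSet {V : Type*} (G : SimpleGraph V) (D : Set V) : Prop :=
  ∀ v : V, v ∈ D ∨ ∃ u ∈ D, G.Adj u v

/-- The domination number `γ(G)`: minimum size of a dominating set. -/
noncomputable def domNum {V : Type*} (G : SimpleGraph V) : ℕ :=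
  sInf {n : ℕ | ∃ D : Set V, IsDomSet G D ∧ D.ncard = n}

/-- `S` is a minimal dominating set of `G` containing `X`. -/
def IsMinDomContaining {V : Type*} (G : SimpleGraph V) (X S : Set V) : Prop :=
  IsDomSet G S ∧ X ⊆ S ∧ ∀ S' : Set V, X ⊆ S' → S' ⊂ S → ¬ IsDomSet G S'

/-- `y` is a private neighbor of `x` with respect to `S`: `y ∉ S` and `N(y) ∩ S = {x}`. -/
def IsPrivNbr {V : Type*} (G : SimpleGraph V) (S : Set V) (x y : V) : Prop :=
  y ∉ S ∧ G.neighborSet y ∩ S = {x}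

/-- Projection to `G` of the part of `D` in the `G`-layer at `h`. -/
def projLayer {V W : Type*} (D : Set (V × W)) (h : W) : Set V :=
  Prod.fst '' (D ∩ {p : V × W | p.2 = h})

lemma domNum_le_ncard {V : Type*} [Fintype V] (G : SimpleGraph V) {D : Set V}
    (h : IsDomSet G D) : domNum G ≤ D.ncard :=
  Nat.sInf_le ⟨D, h, rfl⟩

lemma exists_minDom {V : Type*} [Fintype V] (G : SimpleGraph V) :
    ∃ D : Set V, IsDomSet G D ∧ D.ncard = domNum G := by
  have hne : {n : ℕ | ∃ D : Set V, IsDomSet G D ∧ D.ncard = n}.Nonempty :=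
    ⟨(Set.univ : Set V).ncard, Set.univ, fun v => Or.inl trivial, rfl⟩
  obtain ⟨D, hD, hcard⟩ := Nat.sInf_mem hne
  exact ⟨D, hD, hcard⟩

theorem clark_suen {V W : Type*} [Fintype V] [Fintype W]
    (G : SimpleGraph V) (H : SimpleGraph W) :
    2 * domNum (G □ H) ≥ domNum G * domNum H := by
  classical
  obtain ⟨DG, hDG, hDGcard⟩ := exists_minDom G
  obtain ⟨D, hD, hDcard⟩ := exists_minDom (G □ H)
  -- choice function: every vertex is dominated by a specific element of DG
  have hex : ∀ v : V, ∃ d, d ∈ DG ∧ (d = v ∨ G.Adj d v) := by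
    intro v
    rcases hDG v with h | ⟨u, hu, hadj⟩
    exacts [⟨v, h, Or.inl rfl⟩, ⟨u, hu, Or.inr hadj⟩]
  choose f hfDG hfadj using hex
  set DGf : Finset V := (Set.toFinite DG).toFinset with hDGf
  set Df : Finset (V × W) := (Set.toFinite D).toFinset with hDf
  have hmemDGf : ∀ d, d ∈ DGf ↔ d ∈ DG := fun d => Set.Finite.mem_toFinset _
  have hmemDf : ∀ p, p ∈ Df ↔ p ∈ D := fun p => Set.Finite.mem_toFinset _
  have hDGfcard : DGf.card = domNum G := by
    rw [← hDGcard, Set.ncard_eq_toFinset_card]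
  have hDfcard : Df.card = domNum (G □ H) := by
    rw [← hDcard, Set.ncard_eq_toFinset_card]
  -- the "vertical domination" predicate and cell sets
  set vert : V → W → Prop := fun d w => ∃ p ∈ Df, f p.1 = d ∧ (p.2 = w ∨ H.Adj p.2 w)
    with hvert
  set Cw : W → Finset V := fun w => DGf.filter (fun d => ¬ vert d w) with hCw
  set Dwf : W → Finset (V × W) := fun w => Df.filter (fun p => p.2 = w) with hDwf
  set Tube : V → Finset (V × W) := fun d => Df.filter (fun p => f p.1 = d) with hTube
  -- projLayer as a finset
  have hproj : ∀ w : W, projLayer D w = ↑((Dwf w).image Prod.fst) := by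
    intro w
    ext g
    simp only [projLayer, Set.mem_image, Finset.coe_image, Finset.mem_coe,
      Finset.mem_filter, hDwf, hmemDf, Set.mem_inter_iff, Set.mem_setOf_eq]
  -- Claim A: for each w, projLayer D w together with DGf \ Cw w dominates G
  have claimA : ∀ w : W, (Cw w).card ≤ (Dwf w).card := by
    intro w
    have hdom : IsDomSet G (↑((Dwf w).image Prod.fst ∪ (DGf \ Cw w))) := by
      intro g
      by_cases hc : f g ∈ Cw w
      · -- vertical domination fails for the cell of g; must be dominated horizontally
        have hnv : ¬ vert (f g) w := (Finset.mem_filter.1 hc).2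
        rcases hD (g, w) with h | ⟨u, hu, hadj⟩
        · exact absurd ⟨(g, w), (hmemDf _).2 h, rfl, Or.inl rfl⟩ hnv
        · rcases (SimpleGraph.boxProd_adj).1 hadj with ⟨hadj1, h2⟩ | ⟨hadj2, h1⟩
          · refine Or.inr ⟨u.1, ?_, hadj1⟩
            simp only [Finset.coe_union, Set.mem_union, Finset.mem_coe,
              Finset.mem_image, Finset.mem_filter]
            exact Or.inl ⟨u, Finset.mem_filter.2 ⟨(hmemDf u).2 hu, h2⟩, rfl⟩
          · exact absurd ⟨u, (hmemDf u).2 hu, by rw [h1], Or.inr hadj2⟩ hnv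
      · -- f g ∈ DGf \ Cw w dominates g
        have hd : f g ∈ DGf \ Cw w :=
          Finset.mem_sdiff.2 ⟨(hmemDGf _).2 (hfDG g), hc⟩
        rcases hfadj g with h | h
        · refine Or.inl ?_
          simp only [Finset.coe_union, Set.mem_union, Finset.mem_coe]
          exact Or.inr (h ▸ hd)
        · refine Or.inr ⟨f g, ?_, h⟩
          simp only [Finset.coe_union, Set.mem_union, Finset.mem_coe]
          exact Or.inr hd
    have h1 : domNum G ≤ ((Dwf w).image Prod.fst ∪ (DGf \ Cw w)).card := by
      have := domNum_le_ncard G hdom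
      rwa [Set.ncard_coe_finset] at this
    have h2 : ((Dwf w).image Prod.fst ∪ (DGf \ Cw w)).card ≤
        ((Dwf w).image Prod.fst).card + (DGf \ Cw w).card := Finset.card_union_le _ _
    have h3 : ((Dwf w).image Prod.fst).card ≤ (Dwf w).card := Finset.card_image_le
    have hsub : Cw w ⊆ DGf := Finset.filter_subset _ _
    have h4 : (DGf \ Cw w).card = DGf.card - (Cw w).card := Finset.card_sdiff_of_subset hsub
    have h5 : (Cw w).card ≤ DGf.card := Finset.card_le_card hsub
    omega
  -- Claim B: for each d ∈ DGf, Tube projection together with {w | d ∈ Cw w} dominates H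
  have claimB : ∀ d ∈ DGf,
      domNum H ≤ (Tube d).card + (Finset.univ.filter (fun w => d ∈ Cw w)).card := by
    intro d hd
    have hdom : IsDomSet H
        (↑((Tube d).image Prod.snd ∪ Finset.univ.filter (fun w => d ∈ Cw w))) := by
      intro w
      by_cases hc : d ∈ Cw w
      · refine Or.inl ?_
        simp only [Finset.coe_union, Set.mem_union, Finset.mem_coe, Finset.mem_filter,
          Finset.mem_univ]
        exact Or.inr ⟨trivial, hc⟩
      · have hv : vert d w := by
          by_contra hnv
          exact hc (Finset.mem_filter.2 ⟨hd, hnv⟩)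
        obtain ⟨p, hp, hpd, hpw⟩ := hv
        rcases hpw with h | h
        · refine Or.inl ?_
          simp only [Finset.coe_union, Set.mem_union, Finset.mem_coe, Finset.mem_image]
          exact Or.inl ⟨p, Finset.mem_filter.2 ⟨hp, hpd⟩, h⟩
        · refine Or.inr ⟨p.2, ?_, h⟩
          simp only [Finset.coe_union, Set.mem_union, Finset.mem_coe, Finset.mem_image]
          exact Or.inl ⟨p, Finset.mem_filter.2 ⟨hp, hpd⟩, rfl⟩
    have h1 := domNum_le_ncard H hdom
    rw [Set.ncard_coe_finset] at h1
    calc domNum H ≤ ((Tube d).image Prod.snd ∪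
          Finset.univ.filter (fun w => d ∈ Cw w)).card := h1
      _ ≤ ((Tube d).image Prod.snd).card +
            (Finset.univ.filter (fun w => d ∈ Cw w)).card := Finset.card_union_le _ _
      _ ≤ (Tube d).card + (Finset.univ.filter (fun w => d ∈ Cw w)).card := by
            exact Nat.add_le_add_right Finset.card_image_le _
  -- sum of tube sizes equals |D|
  have hsumTube : ∑ d ∈ DGf, (Tube d).card = Df.card := by
    rw [Finset.card_eq_sum_card_fiberwise (f := fun p => f p.1) (t := DGf)]
    intro p _
    exact (hmemDGf _).2 (hfDG p.1)
  -- sum of layer sizes equals |D|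
  have hsumLayer : ∑ w : W, (Dwf w).card = Df.card := by
    rw [Finset.card_eq_sum_card_fiberwise (f := Prod.snd) (t := Finset.univ)]
    intro p _
    exact Finset.mem_univ _
  -- double counting the cells
  have hswap : ∑ d ∈ DGf, (Finset.univ.filter (fun w => d ∈ Cw w)).card
      = ∑ w : W, (Cw w).card := by
    have h1 : ∀ d, (Finset.univ.filter (fun w => d ∈ Cw w)).card
        = ∑ w : W, if d ∈ Cw w then 1 else 0 := by
      intro d; rw [Finset.card_filter]
    have h2 : ∀ w, (Cw w).card = ∑ d ∈ DGf, if d ∈ Cw w then 1 else 0 := by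
      intro w
      rw [← Finset.card_filter]
      congr 1
      ext d
      simp only [Finset.mem_filter, hCw]
      tauto
    simp_rw [h1, h2]
    exact Finset.sum_comm
  -- put everything together
  have key : DGf.card * domNum H ≤ 2 * Df.card := by
    calc DGf.card * domNum H = ∑ _d ∈ DGf, domNum H := by
          rw [Finset.sum_const, smul_eq_mul, mul_comm]
      _ ≤ ∑ d ∈ DGf, ((Tube d).card + (Finset.univ.filter (fun w => d ∈ Cw w)).card) :=
          Finset.sum_le_sum claimB
      _ = Df.card + ∑ w : W, (Cw w).card := by
          rw [Finset.sum_add_distrib, hsumTube, hswap]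
      _ ≤ Df.card + ∑ w : W, (Dwf w).card := by
          exact Nat.add_le_add_left (Finset.sum_le_sum fun w _ => claimA w) _
      _ = 2 * Df.card := by rw [hsumLayer]; ring
  rw [ge_iff_le, ← hDGfcard, ← hDfcard]
  exact key
end

section
/- Let G and H be graphs and D a dominating set of G □ H. If there exist minimum dominating sets D₁ and D₂ of G such that for every h ∈ V(H), p_G(D ∩ G_h) ⊆ D₁ or p_G(D ∩ G_h) ⊆ D₂, then |D| ≥ γ(G)·γ(H). -/
open SimpleGraph

lemma mem_projLayer {V W : Type*} {D : Set (V × W)} {g : V} {h : W} :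
    g ∈ projLayer D h ↔ (g, h) ∈ D := by
  constructor
  · rintro ⟨⟨a, b⟩, ⟨hm, hb⟩, rfl⟩
    have hb' : b = h := hb
    subst hb'
    exact hm
  · intro hm
    exact ⟨(g, h), ⟨hm, rfl⟩, rfl⟩

/-- Every vertex of a minimum dominating set has a closed private neighbor. -/
lemma exists_privnbr {V : Type*} [Fintype V] {G : SimpleGraph V} {D₁ : Set V}
    (hdom : IsDomSet G D₁) (hcard : D₁.ncard = domNum G) :
    ∀ x, ∃ w, x ∈ D₁ →
      ((w = x ∨ G.Adj x w) ∧ ∀ u ∈ D₁, (u = w ∨ G.Adj w u) → u = x) := by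
  intro x
  by_cases hx : x ∈ D₁
  swap
  · exact ⟨x, fun h => absurd h hx⟩
  by_contra hcon
  have key : ∀ w, (w = x ∨ G.Adj x w) → ∃ u, u ∈ D₁ ∧ (u = w ∨ G.Adj w u) ∧ u ≠ x := by
    intro w hw
    by_contra hk
    push_neg at hk
    exact hcon ⟨w, fun _ => ⟨hw, fun u hu hrel => hk u hu hrel⟩⟩
  have hdom' : IsDomSet G (D₁ \ {x}) := by
    intro v
    rcases eq_or_ne v x with rfl | hvx
    · obtain ⟨u, hu, hrel, hux⟩ := key v (Or.inl rfl)
      refine Or.inr ⟨u, ⟨hu, hux⟩, ?_⟩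
      rcases hrel with rfl | hadj
      · exact absurd rfl hux
      · exact hadj.symm
    · by_cases hv : v ∈ D₁
      · exact Or.inl ⟨hv, hvx⟩
      · rcases hD₁v : hdom v with hv' | ⟨u₀, hu₀, hadj₀⟩
        · exact absurd hv' hv
        · rcases eq_or_ne u₀ x with rfl | hne
          · obtain ⟨u, hu, hrel, hux⟩ := key v (Or.inr hadj₀)
            refine Or.inr ⟨u, ⟨hu, hux⟩, ?_⟩
            rcases hrel with rfl | hadj
            · exact absurd hu hv
            · exact hadj.symm
          · exact Or.inr ⟨u₀, ⟨hu₀, hne⟩, hadj₀⟩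
  have hle : domNum G ≤ (D₁ \ {x}).ncard := Nat.sInf_le ⟨D₁ \ {x}, hdom', rfl⟩
  have hlt : (D₁ \ {x}).ncard < D₁.ncard :=
    Set.ncard_diff_singleton_lt_of_mem hx (Set.toFinite D₁)
  omega

/-- Key covering fact: if `w` is a private neighbor of `x` w.r.t. `D'` and the layer at `h`
projects into `D'`, then either `(x,h) ∈ D` or `(w, h')∈ D` for some `h'` adjacent to `h`. -/
lemma layer_cover {V W : Type*} {G : SimpleGraph V} {H : SimpleGraph W} {D : Set (V × W)}
    (hD : IsDomSet (G □ H) D) {D' : Set V} {x w : V}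
    (hw : ∀ u ∈ D', (u = w ∨ G.Adj w u) → u = x) {h : W}
    (hp : projLayer D h ⊆ D') :
    (x, h) ∈ D ∨ ∃ h', H.Adj h' h ∧ (w, h') ∈ D := by
  rcases hD (w, h) with hm | ⟨⟨u, h'⟩, hu, hadj⟩
  · have hwD' : w ∈ D' := hp (mem_projLayer.mpr hm)
    have hwx : w = x := hw w hwD' (Or.inl rfl)
    exact Or.inl (hwx ▸ hm)
  · rw [boxProd_adj] at hadj
    rcases hadj with ⟨hGadj, hh⟩ | ⟨hHadj, huw⟩
    · have hh' : h' = h := hh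
      subst hh'
      have huD' : u ∈ D' := hp (mem_projLayer.mpr hu)
      have hux : u = x := hw u huD' (Or.inr hGadj.symm)
      exact Or.inl (hux ▸ hu)
    · have huw' : u = w := huw
      subst huw'
      exact Or.inr ⟨h', hHadj, hu⟩

theorem two_minimum_sets_bound {V W : Type*} [Fintype V] [Fintype W]
    (G : SimpleGraph V) (H : SimpleGraph W) (D : Set (V × W))
    (hD : IsDomSet (G □ H) D)
    (D₁ D₂ : Set V)
    (hD₁ : IsDomSet G D₁) (hD₁card : D₁.ncard = domNum G)
    (hD₂ : IsDomSet G D₂) (hD₂card : D₂.ncard = domNum G)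
    (hproj : ∀ h : W, projLayer D h ⊆ D₁ ∨ projLayer D h ⊆ D₂) :
    D.ncard ≥ domNum G * domNum H := by
  classical
  choose w₁ hw₁ using exists_privnbr hD₁ hD₁card
  choose w₂ hw₂ using exists_privnbr hD₂ hD₂card
  set W1 : Set W := {h | projLayer D h ⊆ D₁} with hW1def
  have hW2 : ∀ h, h ∉ W1 → projLayer D h ⊆ D₂ := fun h hh => (hproj h).resolve_left hh
  -- basic facts about private neighbors
  have flip₁ : ∀ x ∈ D₁, x = w₁ x ∨ G.Adj (w₁ x) x := by
    intro x hx
    rcases (hw₁ x hx).1 with h | h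
    · exact Or.inl h.symm
    · exact Or.inr h.symm
  have flip₂ : ∀ y ∈ D₂, y = w₂ y ∨ G.Adj (w₂ y) y := by
    intro y hy
    rcases (hw₂ y hy).1 with h | h
    · exact Or.inl h.symm
    · exact Or.inr h.symm
  have c1 : ∀ x ∈ D₁, w₁ x ∈ D₁ → w₁ x = x := fun x hx h => (hw₁ x hx).2 _ h (Or.inl rfl)
  have c2 : ∀ y ∈ D₂, w₂ y ∈ D₂ → w₂ y = y := fun y hy h => (hw₂ y hy).2 _ h (Or.inl rfl)
  have u1 : ∀ x ∈ D₁, ∀ x' ∈ D₁, w₁ x = w₁ x' → x = x' := by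
    intro x hx x' hx' heq
    have hrel := flip₁ x hx
    rw [heq] at hrel
    exact (hw₁ x' hx').2 x hx hrel
  have u2 : ∀ y ∈ D₂, ∀ y' ∈ D₂, w₂ y = w₂ y' → y = y' := by
    intro y hy y' hy' heq
    have hrel := flip₂ y hy
    rw [heq] at hrel
    exact (hw₂ y' hy').2 y hy hrel
  -- consistency: if x = w₂ y ∈ D₁ and w₁ x ∈ D₂ then w₁ x = y
  have hcons : ∀ y ∈ D₂, w₂ y ∈ D₁ → w₁ (w₂ y) ∈ D₂ → w₁ (w₂ y) = y := by
    intro y hy hxD hwD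
    exact (hw₂ y hy).2 _ hwD ((hw₁ _ hxD).1)
  -- construct the matching σ
  obtain ⟨σ, hmaps, hinj, hR1, hR2⟩ :
      ∃ σ : V → V, Set.MapsTo σ D₁ D₂ ∧ Set.InjOn σ D₁ ∧
        (∀ x ∈ D₁, w₁ x ∈ D₂ → σ x = w₁ x) ∧
        (∀ y ∈ D₂, w₂ y ∈ D₁ → σ (w₂ y) = y) := by
    set Dom : Set V := {x | x ∈ D₁ ∧ (w₁ x ∈ D₂ ∨ ∃ y, y ∈ D₂ ∧ w₂ y = x)} with hDomdef
    set ρ : V → V := fun x =>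
      if w₁ x ∈ D₂ then w₁ x
      else if hx : ∃ y, y ∈ D₂ ∧ w₂ y = x then hx.choose else x with hρdef
    have hρ1 : ∀ x, w₁ x ∈ D₂ → ρ x = w₁ x := by
      intro x h
      simp only [hρdef, if_pos h]
    have hρ2 : ∀ x, w₁ x ∉ D₂ → ∀ (hx : ∃ y, y ∈ D₂ ∧ w₂ y = x), ρ x = hx.choose := by
      intro x h hx
      simp only [hρdef, if_neg h, dif_pos hx]
    have hρD₂ : ∀ x ∈ Dom, ρ x ∈ D₂ := by
      intro x hx
      by_cases h : w₁ x ∈ D₂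
      · rw [hρ1 x h]; exact h
      · have hex : ∃ y, y ∈ D₂ ∧ w₂ y = x := hx.2.resolve_left h
        rw [hρ2 x h hex]
        exact hex.choose_spec.1
    have hρR2 : ∀ y ∈ D₂, w₂ y ∈ D₁ → ρ (w₂ y) = y := by
      intro y hy hxD
      by_cases h : w₁ (w₂ y) ∈ D₂
      · rw [hρ1 _ h]
        exact hcons y hy hxD h
      · have hex : ∃ y', y' ∈ D₂ ∧ w₂ y' = w₂ y := ⟨y, hy, rfl⟩
        rw [hρ2 _ h hex]
        exact u2 _ hex.choose_spec.1 y hy hex.choose_spec.2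
    have hρinj : Set.InjOn ρ Dom := by
      intro x hx x' hx' heq
      by_cases h1 : w₁ x ∈ D₂ <;> by_cases h2 : w₁ x' ∈ D₂
      · rw [hρ1 x h1, hρ1 x' h2] at heq
        exact u1 x hx.1 x' hx'.1 heq
      · have hex : ∃ y, y ∈ D₂ ∧ w₂ y = x' := hx'.2.resolve_left h2
        rw [hρ1 x h1, hρ2 x' h2 hex] at heq
        -- w₁ x = hex.choose, w₂ hex.choose = x'
        have hys := hex.choose_spec
        have hx'eq : w₂ (w₁ x) = x' := by rw [heq]; exact hys.2
        -- x' ∈ N[w₁ x] so x' = x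
        have hrel : x' = w₁ x ∨ G.Adj (w₁ x) x' := by
          have := (hw₂ _ (heq ▸ hys.1 : w₁ x ∈ D₂)).1
          rcases this with h | h
          · exact Or.inl (by rw [← hx'eq, h])
          · exact Or.inr (hx'eq ▸ h)
        exact ((hw₁ x hx.1).2 x' hx'.1 hrel).symm ▸ rfl
      · have hex : ∃ y, y ∈ D₂ ∧ w₂ y = x := hx.2.resolve_left h1
        rw [hρ2 x h1 hex, hρ1 x' h2] at heq
        have hys := hex.choose_spec
        have hxeq : w₂ (w₁ x') = x := by rw [← heq]; exact hys.2
        have hrel : x = w₁ x' ∨ G.Adj (w₁ x') x := by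
          have := (hw₂ _ (heq ▸ hys.1 : w₁ x' ∈ D₂)).1
          rcases this with h | h
          · exact Or.inl (by rw [← hxeq, h])
          · exact Or.inr (hxeq ▸ h)
        exact (hw₁ x' hx'.1).2 x hx.1 hrel
      · have hex : ∃ y, y ∈ D₂ ∧ w₂ y = x := hx.2.resolve_left h1
        have hex' : ∃ y, y ∈ D₂ ∧ w₂ y = x' := hx'.2.resolve_left h2
        rw [hρ2 x h1 hex, hρ2 x' h2 hex'] at heq
        have h₁ := hex.choose_spec
        have h₂ := hex'.choose_spec
        rw [← h₁.2, ← h₂.2, heq]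
    -- extend ρ to an injection D₁ → D₂
    have hDomsub : Dom ⊆ D₁ := fun x hx => hx.1
    have himsub : ρ '' Dom ⊆ D₂ := by
      rintro _ ⟨x, hx, rfl⟩
      exact hρD₂ x hx
    have hcardA : (D₁ \ Dom).ncard = (D₂ \ (ρ '' Dom)).ncard := by
      rw [Set.ncard_diff hDomsub (Set.toFinite _), Set.ncard_diff himsub (Set.toFinite _),
        Set.ncard_image_of_injOn hρinj, hD₁card, hD₂card]
    haveI : Fintype ↥(D₁ \ Dom) := (Set.toFinite _).fintype
    haveI : Fintype ↥(D₂ \ (ρ '' Dom)) := (Set.toFinite _).fintype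
    obtain ⟨e⟩ : Nonempty (↥(D₁ \ Dom) ≃ ↥(D₂ \ (ρ '' Dom))) := by
      rw [← Fintype.card_eq]
      have ha : Fintype.card ↥(D₁ \ Dom) = (D₁ \ Dom).ncard := by
        rw [← Nat.card_eq_fintype_card, Nat.card_coe_set_eq]
      have hb : Fintype.card ↥(D₂ \ (ρ '' Dom)) = (D₂ \ (ρ '' Dom)).ncard := by
        rw [← Nat.card_eq_fintype_card, Nat.card_coe_set_eq]
      rw [ha, hb, hcardA]
    refine ⟨fun x => if hx : x ∈ Dom then ρ x else if hx' : x ∈ D₁ \ Dom then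
      ↑(e ⟨x, hx'⟩) else x, ?_, ?_, ?_, ?_⟩
    · intro x hx
      by_cases hd : x ∈ Dom
      · simp only [dif_pos hd]
        exact hρD₂ x hd
      · have hx' : x ∈ D₁ \ Dom := ⟨hx, hd⟩
        simp only [dif_neg hd, dif_pos hx']
        exact (e ⟨x, hx'⟩).2.1
    · intro x hx x' hx' heq
      by_cases hd : x ∈ Dom <;> by_cases hd' : x' ∈ Dom
      · simp only [dif_pos hd, dif_pos hd'] at heq
        exact hρinj hd hd' heq
      · have hm' : x' ∈ D₁ \ Dom := ⟨hx', hd'⟩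
        simp only [dif_pos hd, dif_neg hd', dif_pos hm'] at heq
        exact absurd (heq ▸ Set.mem_image_of_mem ρ hd) (e ⟨x', hm'⟩).2.2
      · have hm : x ∈ D₁ \ Dom := ⟨hx, hd⟩
        simp only [dif_neg hd, dif_pos hm, dif_pos hd'] at heq
        exact absurd (heq ▸ Set.mem_image_of_mem ρ hd') (e ⟨x, hm⟩).2.2
      · have hm : x ∈ D₁ \ Dom := ⟨hx, hd⟩
        have hm' : x' ∈ D₁ \ Dom := ⟨hx', hd'⟩
        simp only [dif_neg hd, dif_pos hm, dif_neg hd', dif_pos hm'] at heq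
        have := e.injective (Subtype.ext heq)
        exact congrArg Subtype.val this
    · intro x hx hw
      have hd : x ∈ Dom := ⟨hx, Or.inl hw⟩
      simp only [dif_pos hd]
      exact hρ1 x hw
    · intro y hy hw
      have hd : w₂ y ∈ Dom := ⟨hw, Or.inr ⟨y, hy, rfl⟩⟩
      simp only [dif_pos hd]
      exact hρR2 y hy hw
  -- the units
  set K : V → Set (V × W) := fun x =>
    {p | (p.1 = x ∧ p ∈ D ∧ p.2 ∈ W1) ∨ (p.1 = w₁ x ∧ p ∈ D)} with hKdef
  set L : V → Set (V × W) := fun y =>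
    {p | (p.1 = y ∧ p ∈ D ∧ p.2 ∉ W1) ∨ (p.1 = w₂ y ∧ p ∈ D)} with hLdef
  set U : V → Set (V × W) := fun x => K x ∪ L (σ x) with hUdef
  have hUsub : ∀ x, U x ⊆ D := by
    intro x p hp
    rcases hp with (⟨_, h, _⟩ | ⟨_, h⟩) | (⟨_, h, _⟩ | ⟨_, h⟩) <;> exact h
  -- each unit's snd-projection dominates H
  have hcover : ∀ x ∈ D₁, IsDomSet H (Prod.snd '' U x) := by
    intro x hx h
    by_cases hh : h ∈ W1
    · rcases layer_cover hD (hw₁ x hx).2 hh with hm | ⟨h', hadj, hm⟩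
      · exact Or.inl ⟨(x, h), Or.inl (Or.inl ⟨rfl, hm, hh⟩), rfl⟩
      · exact Or.inr ⟨h', ⟨(w₁ x, h'), Or.inl (Or.inr ⟨rfl, hm⟩), rfl⟩, hadj⟩
    · have hσx : σ x ∈ D₂ := hmaps hx
      rcases layer_cover hD (hw₂ (σ x) hσx).2 (hW2 h hh) with hm | ⟨h', hadj, hm⟩
      · exact Or.inl ⟨(σ x, h), Or.inr (Or.inl ⟨rfl, hm, hh⟩), rfl⟩
      · exact Or.inr ⟨h', ⟨(w₂ (σ x), h'), Or.inr (Or.inr ⟨rfl, hm⟩), rfl⟩, hadj⟩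
  -- units are pairwise disjoint
  have hUdisj : ∀ x ∈ D₁, ∀ x' ∈ D₁, x ≠ x' → Disjoint (U x) (U x') := by
    intro x hx x' hx' hne
    have hσx : σ x ∈ D₂ := hmaps hx
    have hσx' : σ x' ∈ D₂ := hmaps hx'
    have hσne : σ x ≠ σ x' := fun h => hne (hinj hx hx' h)
    rw [Set.disjoint_left]
    rintro p hp hp'
    -- column membership facts
    have hcolD : p ∈ D → p.1 ∈ D₁ ∨ p.1 ∈ D₂ := by
      intro hpD
      have : p.1 ∈ projLayer D p.2 := mem_projLayer.mpr (by simpa using hpD)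
      rcases hproj p.2 with h | h
      · exact Or.inl (h this)
      · exact Or.inr (h this)
    -- helper contradictions
    have case14 : p.1 = x → p.1 = w₂ (σ x') → False := by
      intro e1 e4
      have hxw : w₂ (σ x') ∈ D₁ := by rw [← e4, e1]; exact hx
      have h5 := hR2 (σ x') hσx' hxw
      rw [← e4, e1] at h5
      exact hσne h5
    have case41 : p.1 = x' → p.1 = w₂ (σ x) → False := by
      intro e1 e4
      have hxw : w₂ (σ x) ∈ D₁ := by rw [← e4, e1]; exact hx'
      have h5 := hR2 (σ x) hσx hxw
      rw [← e4, e1] at h5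
      exact hσne h5.symm
    have case23 : p.1 = w₁ x → p.1 = σ x' → False := by
      intro e2 e3
      have hwD₂ : w₁ x ∈ D₂ := by rw [← e2, e3]; exact hσx'
      have h5 := hR1 x hx hwD₂
      rw [← e2, e3] at h5
      exact hσne h5
    have case32 : p.1 = w₁ x' → p.1 = σ x → False := by
      intro e2 e3
      have hwD₂ : w₁ x' ∈ D₂ := by rw [← e2, e3]; exact hσx
      have h5 := hR1 x' hx' hwD₂
      rw [← e2, e3] at h5
      exact hσne h5.symm
    have case34 : p.1 = σ x → p.1 = w₂ (σ x') → False := by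
      intro e3 e4
      have hwD₂ : w₂ (σ x') ∈ D₂ := by rw [← e4, e3]; exact hσx
      have h5 := c2 (σ x') hσx' hwD₂
      rw [← e4, e3] at h5
      exact hσne h5
    have case43 : p.1 = σ x' → p.1 = w₂ (σ x) → False := by
      intro e3 e4
      have hwD₂ : w₂ (σ x) ∈ D₂ := by rw [← e4, e3]; exact hσx'
      have h5 := c2 (σ x) hσx hwD₂
      rw [← e4, e3] at h5
      exact hσne h5.symm
    rcases hp with (⟨e1, hpD, hpW⟩ | ⟨e2, hpD⟩) | (⟨e3, hpD, hpW⟩ | ⟨e4, hpD⟩) <;>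
      rcases hp' with (⟨e1', hpD', hpW'⟩ | ⟨e2', hpD'⟩) | (⟨e3', hpD', hpW'⟩ | ⟨e4', hpD'⟩)
    -- (1,1)
    · exact hne (by rw [← e1, e1'])
    -- (1,2)
    · have hwD₁ : w₁ x' ∈ D₁ := by rw [← e2', e1]; exact hx
      have h5 := c1 x' hx' hwD₁
      rw [← e2', e1] at h5
      exact hne h5
    -- (1,3)
    · exact hpW' hpW
    -- (1,4)
    · exact case14 e1 e4'
    -- (2,1)
    · have hwD₁ : w₁ x ∈ D₁ := by rw [← e2, e1']; exact hx'
      have h5 := c1 x hx hwD₁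
      rw [← e2, e1'] at h5
      exact hne h5.symm
    -- (2,2)
    · have : w₁ x = w₁ x' := by rw [← e2, e2']
      exact hne (u1 x hx x' hx' this)
    -- (2,3)
    · exact case23 e2 e3'
    -- (2,4)
    · rcases hcolD hpD with hc | hc
      · have hwD₁ : w₁ x ∈ D₁ := e2 ▸ hc
        have hwx : w₁ x = x := c1 x hx hwD₁
        exact case14 (e2.trans hwx) e4'
      · have hwD₂ : w₂ (σ x') ∈ D₂ := e4' ▸ hc
        have h5 := c2 (σ x') hσx' hwD₂
        exact case23 e2 (e4'.trans h5)
    -- (3,1)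
    · exact hpW hpW'
    -- (3,2)
    · exact case32 e2' e3
    -- (3,3)
    · exact hσne (by rw [← e3, e3'])
    -- (3,4)
    · exact case34 e3 e4'
    -- (4,1)
    · exact case41 e1' e4
    -- (4,2)
    · rcases hcolD hpD with hc | hc
      · have hwD₁ : w₁ x' ∈ D₁ := e2' ▸ hc
        have hwx : w₁ x' = x' := c1 x' hx' hwD₁
        exact case41 (e2'.trans hwx) e4
      · have hwD₂ : w₂ (σ x) ∈ D₂ := e4 ▸ hc
        have h5 := c2 (σ x) hσx hwD₂
        exact case32 e2' (e4.trans h5)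
    -- (4,3)
    · exact case43 e3' e4
    -- (4,4)
    · have : w₂ (σ x) = w₂ (σ x') := by rw [← e4, e4']
      exact hσne (u2 (σ x) hσx (σ x') hσx' this)
  -- counting
  have hterm : ∀ x ∈ D₁, domNum H ≤ (U x).ncard := by
    intro x hx
    have h1 : domNum H ≤ (Prod.snd '' U x).ncard :=
      Nat.sInf_le ⟨Prod.snd '' U x, hcover x hx, rfl⟩
    have h2 : (Prod.snd '' U x).ncard ≤ (U x).ncard := Set.ncard_image_le (Set.toFinite _)
    omega
  set s : Finset V := D₁.toFinset with hsdef
  have hscard : s.card = domNum G := by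
    rw [hsdef, ← Set.ncard_eq_toFinset_card', hD₁card]
  have hdisjf : ∀ x ∈ s, ∀ x' ∈ s, x ≠ x' → Disjoint (U x).toFinset (U x').toFinset := by
    intro x hxs x' hxs' hne
    rw [Set.disjoint_toFinset]
    exact hUdisj x (Set.mem_toFinset.mp hxs) x' (Set.mem_toFinset.mp hxs') hne
  have hbUsub : (s.biUnion fun x => (U x).toFinset) ⊆ D.toFinset := by
    intro p hp
    rcases Finset.mem_biUnion.mp hp with ⟨x, _, hpx⟩
    exact Set.mem_toFinset.mpr (hUsub x (Set.mem_toFinset.mp hpx))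
  calc domNum G * domNum H = s.card * domNum H := by rw [hscard]
    _ = s.card • domNum H := by simp
    _ ≤ ∑ x ∈ s, (U x).toFinset.card := by
        refine Finset.card_nsmul_le_sum s _ _ ?_
        intro x hxs
        rw [← Set.ncard_eq_toFinset_card']
        exact hterm x (Set.mem_toFinset.mp hxs)
    _ = (s.biUnion fun x => (U x).toFinset).card := (Finset.card_biUnion hdisjf).symm
    _ ≤ D.toFinset.card := Finset.card_le_card hbUsub
    _ = D.ncard := (Set.ncard_eq_toFinset_card' D).symm
end

section
/- Let G and H be graphs, D a dominating set of G □ H, and S a dominating set of G such that for every h ∈ V(H), S is a minimal dominating set of G containing p_G(D ∩ G_h). If x ∈ S has a private neighbor with respect to S, then {x} × V(H) ⊆ D. -/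
open SimpleGraph

theorem private_neighbor_column_in_D {V W : Type*} [Fintype V] [Fintype W]
    (G : SimpleGraph V) (H : SimpleGraph W) (D : Set (V × W))
    (hD : IsDomSet (G □ H) D)
    (S : Set V) (hS : IsDomSet G S)
    (hmin : ∀ h : W, IsMinDomContaining G (projLayer D h) S)
    (x : V) (hx : x ∈ S) (y : V) (hy : IsPrivNbr G S x y) :
    ∀ h : W, (x, h) ∈ D := by
  intro h
  have hySk : ∀ k : W, (y, k) ∈ D → False := fun k hk =>
    hy.1 ((hmin k).2.1 ⟨(y, k), ⟨hk, rfl⟩, rfl⟩)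
  rcases hD (y, h) with hmem | ⟨⟨u, k⟩, huk, hadj⟩
  · exact absurd hmem (fun hm => hySk h hm)
  · rw [boxProd_adj] at hadj
    rcases hadj with ⟨hGuy, hk⟩ | ⟨_, huy⟩
    · have huS : u ∈ S := (hmin h).2.1 ⟨(u, k), ⟨huk, hk⟩, rfl⟩
      have : u ∈ G.neighborSet y ∩ S := ⟨hGuy.symm, huS⟩
      rw [hy.2] at this
      subst this; subst hk; exact huk
    · subst huy; exact absurd huk (fun hm => hySk k hm)
end

section
/- Let G and H be graphs, D a dominating set of G □ H, and S a dominating set of G such that for every h ∈ V(H), S is a minimal dominating set containing p_G(D ∩ G_h). If x ∈ S has no private neighbor with respect to S and x is adjacent to some vertex of S, then {x} × V(H) ⊆ D. -/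
open SimpleGraph

theorem no_private_neighbor_column_in_D {V W : Type*} [Fintype V] [Fintype W]
    (G : SimpleGraph V) (H : SimpleGraph W) (D : Set (V × W))
    (hD : IsDomSet (G □ H) D)
    (S : Set V) (hS : IsDomSet G S)
    (hmin : ∀ h : W, IsMinDomContaining G (projLayer D h) S)
    (x : V) (hx : x ∈ S)
    (hpriv : ∀ y : V, ¬ IsPrivNbr G S x y)
    (hadj : ∃ z ∈ S, G.Adj x z) :
    ∀ h : W, (x, h) ∈ D := by
  intro h
  by_contra hxh
  obtain ⟨hdom, hsub, hmin'⟩ := hmin h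
  refine hmin' (S \ {x}) ?_ ?_ ?_
  · intro v hv
    refine ⟨hsub hv, ?_⟩
    rintro rfl
    obtain ⟨p, ⟨hpD, hph⟩, hfst⟩ := hv
    have : p = (v, h) := by
      ext
      · exact hfst
      · exact hph
    rw [this] at hpD
    exact hxh hpD
  · exact ⟨Set.diff_subset, fun hle => (hle hx).2 rfl⟩
  · intro v
    by_cases hvx : v = x
    · subst hvx
      obtain ⟨z, hz, hzadj⟩ := hadj
      exact Or.inr ⟨z, ⟨hz, fun hzx => G.ne_of_adj hzadj (Set.mem_singleton_iff.mp hzx).symm⟩,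
        hzadj.symm⟩
    · rcases hS v with hvS | ⟨u, hu, huv⟩
      · exact Or.inl ⟨hvS, hvx⟩
      · by_cases hux : u = x
        · rw [hux] at huv
          by_cases hvS : v ∈ S
          · exact Or.inl ⟨hvS, hvx⟩
          · have hne : G.neighborSet v ∩ S ≠ {x} := fun heq => hpriv v ⟨hvS, heq⟩
            have hxin : x ∈ G.neighborSet v ∩ S := ⟨huv.symm, hx⟩
            have : ¬ (G.neighborSet v ∩ S ⊆ {x}) := by
              intro hsub'
              exact hne (Set.Subset.antisymm hsub' (Set.singleton_subset_iff.mpr hxin))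
            obtain ⟨u', hu', hu'x⟩ := Set.not_subset.mp this
            exact Or.inr ⟨u', ⟨hu'.2, hu'x⟩, (hu'.1 : G.Adj v u').symm⟩
        · exact Or.inr ⟨u, ⟨hu, hux⟩, huv⟩
end

section
/- Let G and H be graphs, D a dominating set of G □ H, and S a dominating set of G such that for every h ∈ V(H), S ∈ M_G(p_G(D ∩ G_h)). Then for every x ∈ S, |D ∩ H_x| ≥ γ(H), where H_x = {(x,h) : h ∈ V(H)}. -/
open SimpleGraph

theorem layer_count_ge_domNum {V W : Type*} [Fintype V] [Fintype W]
    (G : SimpleGraph V) (H : SimpleGraph W) (D : Set (V × W))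
    (hD : IsDomSet (G □ H) D)
    (S : Set V) (hS : IsDomSet G S)
    (hmin : ∀ h : W, IsMinDomContaining G (projLayer D h) S) :
    ∀ x ∈ S, (D ∩ {p : V × W | p.1 = x}).ncard ≥ domNum H := by
  intro x hx
  set Dx : Set W := {h | (x, h) ∈ D} with hDxdef
  have hmem : ∀ (a : V) (b : W), (a, b) ∈ D → a ∈ projLayer D b := by
    intro a b hab
    exact ⟨(a, b), ⟨hab, rfl⟩, rfl⟩
  have key : IsDomSet H Dx := by
    intro h
    by_cases hxh : (x, h) ∈ D
    · exact Or.inl hxh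
    · have hxp : x ∉ projLayer D h := by
        rintro ⟨⟨a, b⟩, ⟨haD, hb⟩, rfl⟩
        simp only [Set.mem_setOf_eq] at hb
        subst hb
        exact hxh haD
      obtain ⟨hSdom, hsub, hminh⟩ := hmin h
      have hnd : ¬ IsDomSet G (S \ {x}) := by
        apply hminh
        · intro v hv
          exact ⟨hsub hv, fun hvx => hxp (hvx ▸ hv)⟩
        · refine ⟨Set.diff_subset, fun hcon => ?_⟩
          exact (hcon hx).2 rfl
      simp only [IsDomSet] at hnd
      push_neg at hnd
      obtain ⟨v, hv1, hv2⟩ := hnd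
      have hvS : v ∈ S → v = x := by
        intro hvs
        by_contra hne
        exact hv1 ⟨hvs, hne⟩
      have hadj : ∀ u ∈ S, G.Adj u v → u = x := by
        intro u hu ha
        by_contra hne
        exact hv2 u ⟨hu, hne⟩ ha
      rcases hD (v, h) with hvh | ⟨⟨a, b⟩, habD, hab⟩
      · have : v = x := hvS (hsub (hmem v h hvh))
        exact absurd (this ▸ hvh) hxh
      · rw [SimpleGraph.boxProd_adj] at hab
        rcases hab with ⟨hGa, hb⟩ | ⟨hHb, ha⟩
        · simp only at hb
          subst hb
          have : a = x := hadj a (hsub (hmem a b habD)) hGa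
          exact absurd (this ▸ habD) hxh
        · simp only at ha hHb
          subst ha
          have hax : a = x := hvS ((hmin b).2.1 (hmem a b habD))
          subst hax
          exact Or.inr ⟨b, habD, hHb⟩
  have him : D ∩ {p : V × W | p.1 = x} = (fun h => (x, h)) '' Dx := by
    ext ⟨a, b⟩
    simp only [Set.mem_inter_iff, Set.mem_setOf_eq, Set.mem_image, hDxdef, Prod.mk.injEq]
    constructor
    · rintro ⟨hab, rfl⟩
      exact ⟨b, hab, rfl, rfl⟩
    · rintro ⟨h, hh, rfl, rfl⟩
      exact ⟨hh, rfl⟩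
  have hinj : Function.Injective (fun h : W => (x, h)) := fun a b hab => (Prod.mk.injEq _ _ _ _ ▸ hab).2
  rw [him, Set.ncard_image_of_injective _ hinj]
  exact Nat.sInf_le ⟨Dx, key, rfl⟩
end

section
/- Let S₁, S₂ be two dominating sets of a graph G. If b ∈ S₂ \ S₁ is a private neighbor of a ∈ S₁ \ S₂ with respect to S₁, and b has a private neighbor with respect to S₂ lying in S₁ \ S₂, then a is a private neighbor of b with respect to S₂; moreover b is the only neighbor of a in S₂ \ S₁ and a is the only neighbor of b in S₁ \ S₂. -/
open SimpleGraph

theorem observation_zero {V : Type*} [Fintype V]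
    (G : SimpleGraph V) (S₁ S₂ : Set V)
    (hS₁ : IsDomSet G S₁) (hS₂ : IsDomSet G S₂)
    (a b : V) (ha : a ∈ S₁ \ S₂) (hb : b ∈ S₂ \ S₁)
    (hba : IsPrivNbr G S₁ a b)
    (hc : ∃ c ∈ S₁ \ S₂, IsPrivNbr G S₂ b c) :
    IsPrivNbr G S₂ b a ∧
    (∀ z ∈ S₂ \ S₁, G.Adj a z → z = b) ∧
    (∀ z ∈ S₁ \ S₂, G.Adj b z → z = a) := by
  obtain ⟨c, hcS, hcpriv⟩ := hc
  obtain ⟨hbnS₁, hNb⟩ := hba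
  obtain ⟨hcnS₂, hNc⟩ := hcpriv
  -- c is adjacent to b, since b ∈ N(c) ∩ S₂ = {b}
  have hcb : G.Adj c b := by
    have : b ∈ G.neighborSet c ∩ S₂ := hNc ▸ rfl
    exact this.1
  -- c ∈ N(b) ∩ S₁ = {a}, so c = a
  have hca : c = a := by
    have : c ∈ G.neighborSet b ∩ S₁ := ⟨hcb.symm, hcS.1⟩
    rw [hNb] at this; exact this
  rw [hca] at hNc
  refine ⟨⟨ha.2, hNc⟩, ?_, ?_⟩
  · intro z hz hadj
    have : z ∈ G.neighborSet a ∩ S₂ := ⟨hadj, hz.1⟩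
    rw [hNc] at this; exact this
  · intro z hz hadj
    have : z ∈ G.neighborSet b ∩ S₁ := ⟨hadj, hz.1⟩
    rw [hNb] at this; exact this
end

section
/- Let G and H be graphs, D a dominating set of G □ H, and {g₁,…,g_k} a minimum dominating set of G with a partition {π₁,…,π_k} of V(G) satisfying π_i ⊆ N[g_i]. For each h ∈ V(H), let m_h be the number of indices i such that no vertex of the cell π_i × {h} is vertically dominated by D. Then |D ∩ G_h| ≥ m_h for every h ∈ V(H). -/
open SimpleGraph

theorem layer_card_ge_undominated_cells {V W : Type*} [Fintype V] [Fintype W]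
    (G : SimpleGraph V) (H : SimpleGraph W) (D : Set (V × W))
    (hD : IsDomSet (G □ H) D)
    (k : ℕ) (g : Fin k → V) (hginj : Function.Injective g)
    (hgdom : IsDomSet G (Set.range g)) (hk : k = domNum G)
    (π : Fin k → Set V)
    (hπ : ∀ i : Fin k, π i ⊆ insert (g i) (G.neighborSet (g i)))
    (hpart : ∀ v : V, ∃! i : Fin k, v ∈ π i) :
    ∀ h : W,
      (D ∩ {p : V × W | p.2 = h}).ncard ≥
        {i : Fin k | ∀ u ∈ π i, ∀ h' : W, (h' = h ∨ H.Adj h' h) → (u, h') ∉ D}.ncard := by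
  intro h
  set S := {i : Fin k | ∀ u ∈ π i, ∀ h' : W, (h' = h ∨ H.Adj h' h) → (u, h') ∉ D} with hSdef
  set P := Prod.fst '' (D ∩ {p : V × W | p.2 = h}) with hPdef
  have hQdom : IsDomSet G (P ∪ g '' Sᶜ) := by
    intro v
    obtain ⟨i, hvi, -⟩ := hpart v
    by_cases hiS : i ∈ S
    · rcases hD (v, h) with hmem | ⟨⟨a, b⟩, habD, hadj⟩
      · exact absurd hmem (hiS v hvi h (Or.inl rfl))
      · rw [boxProd_adj] at hadj
        rcases hadj with ⟨hadj, hbh⟩ | ⟨hadj, hav⟩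
        · refine Or.inr ⟨a, Or.inl ⟨(a, b), ⟨habD, hbh⟩, rfl⟩, hadj⟩
        · exact absurd habD (by rw [show a = v from hav]; exact hiS v hvi b (Or.inr hadj))
    · rcases hπ i hvi with rfl | hadj
      · exact Or.inl (Or.inr ⟨i, hiS, rfl⟩)
      · exact Or.inr ⟨g i, Or.inr ⟨i, hiS, rfl⟩, hadj⟩
  have h1 : k ≤ (P ∪ g '' Sᶜ).ncard := by
    exact hk.trans_le (Nat.sInf_le ⟨P ∪ g '' Sᶜ, hQdom, rfl⟩)
  have h2 : (P ∪ g '' Sᶜ).ncard ≤ P.ncard + (g '' Sᶜ).ncard := Set.ncard_union_le _ _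
  have h3 : (g '' Sᶜ).ncard = Sᶜ.ncard := Set.ncard_image_of_injective _ hginj
  have h4 : S.ncard + Sᶜ.ncard = k := by
    rw [Set.ncard_add_ncard_compl]
    simp
  have h5 : P.ncard ≤ (D ∩ {p : V × W | p.2 = h}).ncard := Set.ncard_image_le (Set.toFinite _)
  omega
end

section
/- Let G and H be graphs, D a dominating set of G □ H, and {g₁,…,g_k} a minimum dominating set of G with a partition {π₁,…,π_k} of V(G) satisfying π_i ⊆ N[g_i]. For i ∈ [k], let H_i = π_i × V(H) and let n_i be the number of vertically undominated cells π_i × {h} (h ∈ V(H)). Then for each i, |D ∩ H_i| + n_i ≥ γ(H). -/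
open SimpleGraph

theorem strip_card_plus_undominated_ge {V W : Type*} [Fintype V] [Fintype W]
    (G : SimpleGraph V) (H : SimpleGraph W) (D : Set (V × W))
    (hD : IsDomSet (G □ H) D)
    (k : ℕ) (g : Fin k → V) (hginj : Function.Injective g)
    (hgdom : IsDomSet G (Set.range g)) (hk : k = domNum G)
    (π : Fin k → Set V)
    (hπ : ∀ i : Fin k, π i ⊆ insert (g i) (G.neighborSet (g i)))
    (hpart : ∀ v : V, ∃! i : Fin k, v ∈ π i) :
    ∀ i : Fin k,
      (D ∩ {p : V × W | p.1 ∈ π i}).ncard +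
        {h : W | ∀ u ∈ π i, ∀ h' : W, (h' = h ∨ H.Adj h' h) → (u, h') ∉ D}.ncard ≥
      domNum H := by
  intro i
  classical
  set A : Set W := {h | ∃ u ∈ π i, (u, h) ∈ D} with hA
  set B : Set W := {h : W | ∀ u ∈ π i, ∀ h' : W, (h' = h ∨ H.Adj h' h) → (u, h') ∉ D} with hB
  have hdom : IsDomSet H (A ∪ B) := by
    intro h
    by_cases hb : h ∈ B
    · exact Or.inl (Or.inr hb)
    · simp only [hB, Set.mem_setOf_eq] at hb
      push_neg at hb
      obtain ⟨u, hu, h', hh', hmem⟩ := hb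
      rcases hh' with rfl | hadj
      · exact Or.inl (Or.inl ⟨u, hu, hmem⟩)
      · exact Or.inr ⟨h', Or.inl ⟨u, hu, hmem⟩, hadj⟩
  have h1 : domNum H ≤ (A ∪ B).ncard := Nat.sInf_le ⟨A ∪ B, hdom, rfl⟩
  have h2 : (A ∪ B).ncard ≤ A.ncard + B.ncard := Set.ncard_union_le A B
  have h3 : A.ncard ≤ (D ∩ {p : V × W | p.1 ∈ π i}).ncard := by
    have hsub : A ⊆ Prod.snd '' (D ∩ {p : V × W | p.1 ∈ π i}) := by
      rintro h ⟨u, hu, hmem⟩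
      exact ⟨(u, h), ⟨hmem, hu⟩, rfl⟩
    calc A.ncard ≤ (Prod.snd '' (D ∩ {p : V × W | p.1 ∈ π i})).ncard :=
          Set.ncard_le_ncard hsub (Set.toFinite _)
      _ ≤ (D ∩ {p : V × W | p.1 ∈ π i}).ncard := Set.ncard_image_le (Set.toFinite _)
  omega
end

section
/- Let G and H be graphs, D a dominating set of G □ H with |D ∩ G_h| = m_h for some h ∈ V(H), where m_h counts the vertically undominated cells in the layer G_h with respect to a minimum dominating set {g₁,…,g_k} of G and partition {π₁,…,π_k} with π_i ⊆ N[g_i]. Then p_G(D ∩ G_h) ∪ {g_i : the cell π_i × {h} is vertically dominated} is a minimum dominating set of G; in particular p_G(D ∩ G_h) is contained in a minimum dominating set of G. -/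
open SimpleGraph

theorem tight_layer_gives_minimum_dom_set {V W : Type*} [Fintype V] [Fintype W]
    (G : SimpleGraph V) (H : SimpleGraph W) (D : Set (V × W))
    (hD : IsDomSet (G □ H) D)
    (k : ℕ) (g : Fin k → V) (hginj : Function.Injective g)
    (hgdom : IsDomSet G (Set.range g)) (hk : k = domNum G)
    (π : Fin k → Set V)
    (hπ : ∀ i : Fin k, π i ⊆ insert (g i) (G.neighborSet (g i)))
    (hpart : ∀ v : V, ∃! i : Fin k, v ∈ π i)
    (h : W)
    (hm : (D ∩ {p : V × W | p.2 = h}).ncard =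
      {i : Fin k | ∀ u ∈ π i, ∀ h' : W, (h' = h ∨ H.Adj h' h) → (u, h') ∉ D}.ncard) :
    (IsDomSet G (projLayer D h ∪
        g '' {i : Fin k | ∃ u ∈ π i, ∃ h' : W, (h' = h ∨ H.Adj h' h) ∧ (u, h') ∈ D}) ∧
      (projLayer D h ∪
        g '' {i : Fin k | ∃ u ∈ π i, ∃ h' : W, (h' = h ∨ H.Adj h' h) ∧ (u, h') ∈ D}).ncard =
        domNum G) ∧
    ∃ M : Set V, IsDomSet G M ∧ M.ncard = domNum G ∧ projLayer D h ⊆ M := by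
  classical
  set U := {i : Fin k | ∀ u ∈ π i, ∀ h' : W, (h' = h ∨ H.Adj h' h) → (u, h') ∉ D} with hU
  set T := {i : Fin k | ∃ u ∈ π i, ∃ h' : W, (h' = h ∨ H.Adj h' h) ∧ (u, h') ∈ D} with hT
  have hTU : T = Uᶜ := by
    ext i
    simp only [hT, hU, Set.mem_setOf_eq, Set.mem_compl_iff]
    push_neg
    simp
  set S := projLayer D h ∪ g '' T with hS
  have hdom : IsDomSet G S := by
    intro v
    obtain ⟨i, hvi, -⟩ := hpart v
    by_cases hi : i ∈ T
    · have hgi : g i ∈ S := Or.inr ⟨i, hi, rfl⟩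
      rcases hπ i hvi with hv | hv
      · exact Or.inl (hv ▸ hgi)
      · exact Or.inr ⟨g i, hgi, hv⟩
    · have hiU : i ∈ U := by
        rw [hTU] at hi; simpa using hi
      rcases hD (v, h) with hvD | ⟨⟨u, h'⟩, huD, hadj⟩
      · have : v ∈ projLayer D h := ⟨(v, h), ⟨hvD, rfl⟩, rfl⟩
        exact Or.inl (Or.inl this)
      · rw [SimpleGraph.boxProd_adj] at hadj
        rcases hadj with ⟨hadj, hh⟩ | ⟨hadj, huv⟩
        · have hu : u ∈ projLayer D h := ⟨(u, h'), ⟨huD, hh⟩, rfl⟩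
          exact Or.inr ⟨u, Or.inl hu, hadj⟩
        · have huv' : u = v := huv
          subst huv'
          exact absurd huD (hiU u hvi h' (Or.inr hadj))
  have hcard_le : S.ncard ≤ k := by
    have h1 : (projLayer D h).ncard ≤ (D ∩ {p : V × W | p.2 = h}).ncard :=
      Set.ncard_image_le (Set.toFinite _)
    have h2 : (g '' T).ncard = T.ncard := Set.ncard_image_of_injective _ hginj
    have h3 : U.ncard + Uᶜ.ncard = k := by
      rw [Set.ncard_add_ncard_compl, Nat.card_eq_fintype_card, Fintype.card_fin]
    calc S.ncard ≤ (projLayer D h).ncard + (g '' T).ncard := Set.ncard_union_le _ _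
      _ ≤ U.ncard + Uᶜ.ncard := by
          rw [h2, hTU]
          exact add_le_add (h1.trans_eq hm) le_rfl
      _ = k := h3
  have hge : domNum G ≤ S.ncard := Nat.sInf_le ⟨S, hdom, rfl⟩
  have hcard : S.ncard = domNum G := le_antisymm (hk ▸ hcard_le) hge
  exact ⟨⟨hdom, hcard⟩, S, hdom, hcard, Set.subset_union_left⟩
end

section
/- Let G and H be graphs and D a dominating set of G □ H. Suppose S is a dominating set of G with S ∈ M_G(p_G(D ∩ G_h)) for all h ∈ V(H), and let S₁ ⊆ S be the vertices of S having a private neighbor with respect to S. Then S₁ × V(H) ⊆ D. -/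
open SimpleGraph

theorem private_part_times_univ_subset {V W : Type*} [Fintype V] [Fintype W]
    (G : SimpleGraph V) (H : SimpleGraph W) (D : Set (V × W))
    (hD : IsDomSet (G □ H) D)
    (S : Set V) (hS : IsDomSet G S)
    (hmin : ∀ h : W, IsMinDomContaining G (projLayer D h) S) :
    {x ∈ S | ∃ y : V, IsPrivNbr G S x y} ×ˢ (Set.univ : Set W) ⊆ D := by
  rintro ⟨x, h⟩ ⟨⟨hxS, y, hyS, hNy⟩, -⟩
  have hproj : ∀ k : W, ∀ v : V, (v, k) ∈ D → v ∈ S := by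
    intro k v hv
    exact (hmin k).2.1 ⟨(v, k), ⟨hv, rfl⟩, rfl⟩
  rcases hD (y, h) with hyD | ⟨⟨u, k⟩, huD, hadj⟩
  · exact absurd (hproj h y hyD) hyS
  · rw [SimpleGraph.boxProd_adj] at hadj
    rcases hadj with ⟨hadj, hk⟩ | ⟨hu, hk⟩
    · have huS : u ∈ S := hproj k u huD
      have : u ∈ G.neighborSet y ∩ S := ⟨hadj.symm, huS⟩
      rw [hNy] at this
      simp only [Set.mem_singleton_iff] at this
      cases hk; cases this; exact huD
    · simp only at hk
      exact absurd (hk ▸ hproj k u huD) hyS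
end

section
/- Let G and H be graphs and D a dominating set of G □ H. Suppose S₁ and S₂ are dominating sets of G such that for every h ∈ V(H), S₁ ∈ M_G(p_G(D ∩ G_h)) or S₂ ∈ M_G(p_G(D ∩ G_h)). Let T_i ⊆ V(H) be the set of h for which S_i is such a minimal dominating set (with T₂ = V(H) \ T₁). If x ∈ S_i has a private neighbor with respect to S_i lying outside S₁ ∪ S₂, then {x} × T_i ⊆ D. -/
open SimpleGraph

theorem property_i_of_main {V W : Type*} [Fintype V] [Fintype W]
    (G : SimpleGraph V) (H : SimpleGraph W) (D : Set (V × W))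
    (hD : IsDomSet (G □ H) D)
    (S₁ S₂ : Set V) (hS₁ : IsDomSet G S₁) (hS₂ : IsDomSet G S₂)
    (hmin : ∀ h : W, IsMinDomContaining G (projLayer D h) S₁ ∨
      IsMinDomContaining G (projLayer D h) S₂)
    (T₁ : Set W) (hT₁ : T₁ = {h : W | IsMinDomContaining G (projLayer D h) S₁}) :
    (∀ x ∈ S₁, (∃ y : V, y ∉ S₁ ∪ S₂ ∧ IsPrivNbr G S₁ x y) →
      ∀ h ∈ T₁, (x, h) ∈ D) ∧
    (∀ x ∈ S₂, (∃ y : V, y ∉ S₁ ∪ S₂ ∧ IsPrivNbr G S₂ x y) →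
      ∀ h ∈ T₁ᶜ, (x, h) ∈ D) := by
  have hproj : ∀ h : W, projLayer D h ⊆ S₁ ∪ S₂ := by
    intro h
    rcases hmin h with h1 | h2
    · exact h1.2.1.trans Set.subset_union_left
    · exact h2.2.1.trans Set.subset_union_right
  have key : ∀ (S : Set V) (h : W), IsMinDomContaining G (projLayer D h) S →
      ∀ x ∈ S, (∃ y : V, y ∉ S₁ ∪ S₂ ∧ IsPrivNbr G S x y) → (x, h) ∈ D := by
    intro S h hS x hx ⟨y, hy12, hyS, hNy⟩
    rcases hD (y, h) with hmem | ⟨⟨u, h'⟩, huD, hadj⟩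
    · exact absurd (hproj h ⟨(y, h), ⟨hmem, rfl⟩, rfl⟩) hy12
    · rw [SimpleGraph.boxProd_adj] at hadj
      rcases hadj with ⟨huy, hh⟩ | ⟨hh', hu⟩
      · -- neighbor in G-layer: u adj y, same layer h
        simp only at hh huy
        subst hh
        have huS : u ∈ projLayer D h' := ⟨(u, h'), ⟨huD, rfl⟩, rfl⟩
        have : u ∈ G.neighborSet y ∩ S := ⟨huy.symm, hS.2.1 huS⟩
        rw [hNy] at this
        rwa [this] at huD
      · -- neighbor in H-layer: y ∈ projLayer D h', contradiction
        simp only at hu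
        subst hu
        exact absurd (hproj h' ⟨(u, h'), ⟨huD, rfl⟩, rfl⟩) hy12
  constructor
  · intro x hx hex h hh
    rw [hT₁] at hh
    exact key S₁ h hh x hx hex
  · intro x hx hex h hh
    rw [hT₁] at hh
    rcases hmin h with h1 | h2
    · exact absurd h1 hh
    · exact key S₂ h h2 x hx hex
end
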